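/- arXiv:1505.04769 — 4 statements merged into one kernel-verified Lean document; each statement's English description precedes it below -/
import Mathlib

section
/- The subgroup G of GL₂(ℤ/8ℤ) generated by the four matrices [[5,4],[2,3]], [[1,0],[0,5]], [[1,4],[0,5]], [[1,0],[4,5]] has order 16. -/
open Matrix

/-- The matrix `[[5,4],[2,3]]` as an element of `GL₂(ℤ/8ℤ)` (it is its own inverse). -/
def g₁ : GL (Fin 2) (ZMod 8) := ⟨!![5,4;2,3], !![5,4;2,3], by decide, by decide⟩

/-- The matrix `[[1,0],[0,5]]` as an element of `GL₂(ℤ/8ℤ)` (it is its own inverse). -/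
def g₂ : GL (Fin 2) (ZMod 8) := ⟨!![1,0;0,5], !![1,0;0,5], by decide, by decide⟩

/-- The matrix `[[1,4],[0,5]]` as an element of `GL₂(ℤ/8ℤ)` (it is its own inverse). -/
def g₃ : GL (Fin 2) (ZMod 8) := ⟨!![1,4;0,5], !![1,4;0,5], by decide, by decide⟩

/-- The matrix `[[1,0],[4,5]]` as an element of `GL₂(ℤ/8ℤ)` (it is its own inverse). -/
def g₄ : GL (Fin 2) (ZMod 8) := ⟨!![1,0;4,5], !![1,0;4,5], by decide, by decide⟩

/-- The subgroup `G` of `GL₂(ℤ/8ℤ)` generated by `[[5,4],[2,3]]`, `[[1,0],[0,5]]`,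
`[[1,4],[0,5]]` and `[[1,0],[4,5]]`. -/
def G : Subgroup (GL (Fin 2) (ZMod 8)) := Subgroup.closure {g₁, g₂, g₃, g₄}

def w0 : GL (Fin 2) (ZMod 8) := ⟨!![1,0;0,1], !![1,0;0,1], by decide, by decide⟩
def w1 : GL (Fin 2) (ZMod 8) := ⟨!![5,4;2,3], !![5,4;2,3], by decide, by decide⟩
def w2 : GL (Fin 2) (ZMod 8) := ⟨!![1,0;0,5], !![1,0;0,5], by decide, by decide⟩
def w3 : GL (Fin 2) (ZMod 8) := ⟨!![1,4;0,5], !![1,4;0,5], by decide, by decide⟩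
def w4 : GL (Fin 2) (ZMod 8) := ⟨!![1,0;4,5], !![1,0;4,5], by decide, by decide⟩
def w5 : GL (Fin 2) (ZMod 8) := ⟨!![5,4;2,7], !![5,4;2,7], by decide, by decide⟩
def w6 : GL (Fin 2) (ZMod 8) := ⟨!![5,0;2,7], !![5,0;2,7], by decide, by decide⟩
def w7 : GL (Fin 2) (ZMod 8) := ⟨!![5,4;6,7], !![5,4;6,7], by decide, by decide⟩
def w8 : GL (Fin 2) (ZMod 8) := ⟨!![1,4;0,1], !![1,4;0,1], by decide, by decide⟩
def w9 : GL (Fin 2) (ZMod 8) := ⟨!![1,0;4,1], !![1,0;4,1], by decide, by decide⟩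
def w10 : GL (Fin 2) (ZMod 8) := ⟨!![1,4;4,1], !![1,4;4,1], by decide, by decide⟩
def w11 : GL (Fin 2) (ZMod 8) := ⟨!![5,0;2,3], !![5,0;2,3], by decide, by decide⟩
def w12 : GL (Fin 2) (ZMod 8) := ⟨!![5,4;6,3], !![5,4;6,3], by decide, by decide⟩
def w13 : GL (Fin 2) (ZMod 8) := ⟨!![5,0;6,3], !![5,0;6,3], by decide, by decide⟩
def w14 : GL (Fin 2) (ZMod 8) := ⟨!![1,4;4,5], !![1,4;4,5], by decide, by decide⟩
def w15 : GL (Fin 2) (ZMod 8) := ⟨!![5,0;6,7], !![5,0;6,7], by decide, by decide⟩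

def Glist : List (GL (Fin 2) (ZMod 8)) := [w0, w1, w2, w3, w4, w5, w6, w7, w8, w9, w10, w11, w12, w13, w14, w15]

set_option maxHeartbeats 1000000 in
lemma mul_mem_Glist : ∀ a ∈ Glist, ∀ b ∈ Glist, a * b ∈ Glist := by
  have h : (Glist.all fun x => Glist.all fun y => decide (x * y ∈ Glist)) = true := by decide
  intro a ha b hb
  exact of_decide_eq_true (List.all_eq_true.mp (List.all_eq_true.mp h a ha) b hb)

set_option maxHeartbeats 1000000 in
lemma inv_mem_Glist : ∀ a ∈ Glist, a⁻¹ ∈ Glist := by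
  have h : (Glist.all fun x => decide (x⁻¹ ∈ Glist)) = true := by decide
  intro a ha
  exact of_decide_eq_true (List.all_eq_true.mp h a ha)

def H : Subgroup (GL (Fin 2) (ZMod 8)) where
  carrier := {x | x ∈ Glist}
  one_mem' := show (1 : GL (Fin 2) (ZMod 8)) ∈ Glist from by decide
  mul_mem' {a b} ha hb := mul_mem_Glist a ha b hb
  inv_mem' {a} ha := inv_mem_Glist a ha

lemma hg1 : g₁ ∈ G := Subgroup.subset_closure (by simp)
lemma hg2 : g₂ ∈ G := Subgroup.subset_closure (by simp)
lemma hg3 : g₃ ∈ G := Subgroup.subset_closure (by simp)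
lemma hg4 : g₄ ∈ G := Subgroup.subset_closure (by simp)

lemma G_eq_H : G = H := by
  apply le_antisymm
  · apply Subgroup.closure_le _ |>.mpr
    intro x hx
    rcases hx with h | h | h | h <;> subst h
    · exact show g₁ ∈ Glist from by decide
    · exact show g₂ ∈ Glist from by decide
    · exact show g₃ ∈ Glist from by decide
    · exact show g₄ ∈ Glist from by decide
  · intro x hx
    have hx' : x ∈ Glist := hx
    fin_cases hx'
    · exact (show w0 = 1 from Units.ext (by decide)) ▸ one_mem G
    · exact (show w1 = g₁ from rfl) ▸ hg1
    · exact (show w2 = g₂ from rfl) ▸ hg2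
    · exact (show w3 = g₃ from rfl) ▸ hg3
    · exact (show w4 = g₄ from rfl) ▸ hg4
    · exact (show w5 = g₁ * g₂ from Units.ext (by decide)) ▸ (mul_mem hg1 hg2)
    · exact (show w6 = g₁ * g₃ from Units.ext (by decide)) ▸ (mul_mem hg1 hg3)
    · exact (show w7 = g₁ * g₄ from Units.ext (by decide)) ▸ (mul_mem hg1 hg4)
    · exact (show w8 = g₂ * g₃ from Units.ext (by decide)) ▸ (mul_mem hg2 hg3)
    · exact (show w9 = g₂ * g₄ from Units.ext (by decide)) ▸ (mul_mem hg2 hg4)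
    · exact (show w10 = g₃ * g₄ from Units.ext (by decide)) ▸ (mul_mem hg3 hg4)
    · exact (show w11 = g₁ * g₂ * g₃ from Units.ext (by decide)) ▸ (mul_mem (mul_mem hg1 hg2) hg3)
    · exact (show w12 = g₁ * g₂ * g₄ from Units.ext (by decide)) ▸ (mul_mem (mul_mem hg1 hg2) hg4)
    · exact (show w13 = g₁ * g₃ * g₄ from Units.ext (by decide)) ▸ (mul_mem (mul_mem hg1 hg3) hg4)
    · exact (show w14 = g₂ * g₃ * g₄ from Units.ext (by decide)) ▸ (mul_mem (mul_mem hg2 hg3) hg4)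
    · exact (show w15 = g₁ * g₂ * g₃ * g₄ from Units.ext (by decide)) ▸ (mul_mem (mul_mem (mul_mem hg1 hg2) hg3) hg4)

/-- The subgroup `G` of `GL₂(ℤ/8ℤ)` generated by the four matrices `[[5,4],[2,3]]`,
`[[1,0],[0,5]]`, `[[1,4],[0,5]]`, `[[1,0],[4,5]]` has order 16. -/
theorem G_card_eq_sixteen : Nat.card G = 16 := by
  rw [G_eq_H]
  have : Nat.card H = Nat.card {x : GL (Fin 2) (ZMod 8) // x ∈ Glist} := rfl
  rw [this, Nat.card_eq_fintype_card]
  decide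
end

section
/- Let p be a prime with p ∉ {2, 3, 5} (equivalently, an odd prime of good reduction for the curve of conductor 15). Then 8 divides the number of points of the reduction of E₁ modulo p, i.e. 8 ∣ #E₁(𝔽_p). -/
/-- The reduction modulo `p` of the elliptic curve
`E₁ : y² + xy + y = x³ + x² − 10x − 10` (Cremona label 15A1), i.e. the Weierstrass
curve over `𝔽_p = ZMod p` with coefficients `a₁ = 1`, `a₂ = 1`, `a₃ = 1`, `a₄ = −10`,
`a₆ = −10`. -/
def E₁mod (p : ℕ) : WeierstrassCurve.Affine (ZMod p) :=
  { a₁ := 1, a₂ := 1, a₃ := 1, a₄ := -10, a₆ := -10 }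

/-!
The rational torsion of `E₁` is `ℤ/4 × ℤ/2`: `P = (-2, 3)` has order 4 with `2P = Q = (3, -2)`,
and `T = (-13/4, 9/8)` is a 2-torsion point other than `Q`. These formulas survive reduction
modulo any `p ∉ {2, 3, 5}`, so `E₁(𝔽_p)` contains a point `P` of order 4 and a point `T` of order 2
outside `⟨P⟩`. Then `4 = |⟨P⟩|` and the order 2 of the image of `T` in `E₁(𝔽_p) ⧸ ⟨P⟩` both divide,
so `8 ∣ #E₁(𝔽_p)`.
-/

theorem eight_dvd_natCard_of_addOrderOf_eq_four {G : Type*} [AddCommGroup G] {P T : G}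
    (hP : addOrderOf P = 4) (hT : addOrderOf T = 2) (hTP : T ≠ 2 • P) : 8 ∣ Nat.card G := by
  classical
  have hT_not_mem : T ∉ AddSubgroup.zmultiples P := by
    have hP_fin : IsOfFinAddOrder P := addOrderOf_pos_iff.mp (by omega)
    rw [hP_fin.mem_zmultiples_iff_mem_range_addOrderOf, hP]
    simp only [Finset.mem_image, Finset.mem_range]
    rintro ⟨k, hk, rfl⟩
    -- `addOrderOf (k • P) = 4 / gcd 4 k` is `2` only for `k = 2`
    rw [hP_fin.addOrderOf_nsmul, hP] at hT
    interval_cases k <;> simp_all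
  have hT_quot : addOrderOf (T : G ⧸ AddSubgroup.zmultiples P) = 2 :=
    addOrderOf_eq_prime
      (by rw [← QuotientAddGroup.mk_nsmul, ← hT, addOrderOf_nsmul_eq_zero, QuotientAddGroup.mk_zero])
      (by rwa [Ne, QuotientAddGroup.eq_zero_iff])
  rw [AddSubgroup.card_eq_card_quotient_mul_card_addSubgroup (AddSubgroup.zmultiples P),
    Nat.card_zmultiples, hP]
  exact Nat.mul_dvd_mul (hT_quot ▸ addOrderOf_dvd_natCard _) dvd_rfl

open WeierstrassCurve Affine Point

namespace E₁mod

variable {p : ℕ}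

lemma Δ_eq : (E₁mod p).Δ = 15 ^ 4 := by
  simp only [WeierstrassCurve.Δ, b₂, b₄, b₆, b₈, E₁mod]
  ring

lemma isElliptic [Fact p.Prime] (h3 : (3 : ZMod p) ≠ 0) (h5 : (5 : ZMod p) ≠ 0) :
    (E₁mod p).IsElliptic := by
  rw [isElliptic_iff, Δ_eq, isUnit_iff_ne_zero, show (15 : ZMod p) = 3 * 5 by norm_num]
  exact pow_ne_zero _ (mul_ne_zero h3 h5)

section Points

variable (p) [Fact p.Prime] [(E₁mod p).IsElliptic]

def P : (E₁mod p).Point :=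
  Point.mk (x := -2) (y := 3) (by rw [equation_iff]; simp only [E₁mod]; ring)

def Q : (E₁mod p).Point :=
  Point.mk (x := 3) (y := -2) (by rw [equation_iff]; simp only [E₁mod]; ring)

-- denominators written as powers of `2`, so that `field_simp` needs nothing beyond `h2`
def T (h2 : (2 : ZMod p) ≠ 0) : (E₁mod p).Point :=
  Point.mk (x := -13 / 2 ^ 2) (y := 9 / 2 ^ 3)
    (by rw [equation_iff]; simp only [E₁mod]; field_simp; ring)

variable {p}

lemma two_nsmul_P (h5 : (5 : ZMod p) ≠ 0) : 2 • P p = Q p := by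
  have hy : (3 : ZMod p) ≠ (E₁mod p).negY (-2) 3 := by
    simp only [negY, E₁mod]
    intro h
    exact h5 (by linear_combination h)
  have hslope : (E₁mod p).slope (-2) (-2) 3 3 = -1 := by
    rw [slope_of_Y_ne rfl hy, div_eq_iff (sub_ne_zero.mpr hy)]
    simp only [negY, E₁mod]
    ring
  rw [two_nsmul, P, Point.mk, add_self_of_Y_ne hy, Q, Point.mk]
  congr 1
  · simp only [addX, hslope]; simp only [E₁mod]; ring
  · simp only [addY, negAddY, addX, negY, hslope]; simp only [E₁mod]; ring

lemma two_nsmul_Q : 2 • Q p = 0 := by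
  rw [two_nsmul, Q, Point.mk, add_self_of_Y_eq]
  simp only [negY, E₁mod]
  ring

lemma two_nsmul_T (h2 : (2 : ZMod p) ≠ 0) : 2 • T p h2 = 0 := by
  rw [two_nsmul, T, Point.mk, add_self_of_Y_eq]
  simp only [negY, E₁mod]
  field_simp
  ring

lemma T_ne_Q (h2 : (2 : ZMod p) ≠ 0) (h5 : (5 : ZMod p) ≠ 0) : T p h2 ≠ Q p := by
  rw [T, Q, Point.mk, Point.mk, Ne, some.injEq]
  rintro ⟨hx, -⟩
  field_simp at hx
  exact pow_ne_zero 2 h5 (by linear_combination -hx)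

lemma addOrderOf_P (h5 : (5 : ZMod p) ≠ 0) : addOrderOf (P p) = 4 := by
  refine addOrderOf_eq_prime_pow (n := 1) (p := 2) ?_ ?_
  · rw [pow_one, two_nsmul_P h5, Q, Point.mk]
    exact some_ne_zero _
  · rw [pow_succ, pow_one, mul_nsmul, two_nsmul_P h5, two_nsmul_Q]

lemma addOrderOf_T (h2 : (2 : ZMod p) ≠ 0) : addOrderOf (T p h2) = 2 :=
  addOrderOf_eq_prime (two_nsmul_T h2) (some_ne_zero _)

end Points

end E₁mod

/-- For any prime `p ∉ {2, 3, 5}` (i.e. any odd prime of good reduction of the curve of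
conductor 15), `8` divides the number of points of the reduction of `E₁` modulo `p`. -/
theorem eight_dvd_card_E₁_mod_p (p : ℕ) (hp : p.Prime) (hp2 : p ≠ 2) (hp3 : p ≠ 3)
    (hp5 : p ≠ 5) : 8 ∣ Nat.card (E₁mod p).Point := by
  have : Fact p.Prime := ⟨hp⟩
  have : Fact (Nat.Prime 5) := ⟨by norm_num⟩
  have h2 : (2 : ZMod p) ≠ 0 := mod_cast ZMod.prime_ne_zero p 2 hp2
  have h3 : (3 : ZMod p) ≠ 0 := mod_cast ZMod.prime_ne_zero p 3 hp3
  have h5 : (5 : ZMod p) ≠ 0 := mod_cast ZMod.prime_ne_zero p 5 hp5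
  have := E₁mod.isElliptic h3 h5
  refine eight_dvd_natCard_of_addOrderOf_eq_four (E₁mod.addOrderOf_P h5) (E₁mod.addOrderOf_T h2) ?_
  rw [E₁mod.two_nsmul_P h5]
  exact E₁mod.T_ne_Q h2 h5
end

section
/- Let p ≥ 3 be a prime with p ∉ {3, 5}. Then p does not divide the number of points of the reduction of E₁ modulo p, i.e. p ∤ #E₁(𝔽_p); equivalently, a_p(E₁) ≢ 1 mod p. -/
namespace WeierstrassCurve.Affine

variable {F : Type*} [Field F] (W : WeierstrassCurve.Affine F)

lemma card_nonsingular_fiber_le_two (x : F) : Nat.card {y // W.Nonsingular x y} ≤ 2 := by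
  rcases isEmpty_or_nonempty {y // W.Nonsingular x y} with _ | ⟨⟨y₀, h₀⟩⟩
  · simp
  calc Nat.card {y // W.Nonsingular x y} = {y | W.Nonsingular x y}.ncard := rfl
    _ ≤ ({y₀, W.negY x y₀} : Set F).ncard :=
      Set.ncard_le_ncard (fun _ hy => W.Y_eq_of_X_eq hy.1 h₀.1 rfl) (Set.toFinite _)
    _ ≤ 2 := (Set.ncard_insert_le _ _).trans (by simp)

variable [Fintype F]

lemma card_nonsingular_le :
    Nat.card {xy : F × F // W.Nonsingular xy.1 xy.2} ≤ 2 * Fintype.card F := by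
  rw [Nat.card_congr (Equiv.subtypeProdEquivSigmaSubtype W.Nonsingular), Nat.card_sigma,
    mul_comm, ← Finset.card_univ, ← smul_eq_mul]
  exact Finset.sum_le_card_nsmul _ _ _ fun x _ => W.card_nonsingular_fiber_le_two x

lemma card_point_eq :
    Nat.card W.Point = Nat.card {xy : F × F // W.Nonsingular xy.1 xy.2} + 1 :=
  (Nat.card_congr W.nonsingularPointEquiv).trans Finite.card_option

instance : Finite W.Point :=
  Nat.finite_of_card_ne_zero (W.card_point_eq ▸ Nat.succ_ne_zero _)

lemma card_point_le : Nat.card W.Point ≤ 2 * Fintype.card F + 1 :=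
  W.card_point_eq ▸ Nat.add_le_add_right W.card_nonsingular_le 1

end WeierstrassCurve.Affine

open WeierstrassCurve.Affine

section E₁mod

variable {p : ℕ}

lemma E₁mod_nonsingular_neg_two_three (h5 : (5 : ZMod p) ≠ 0) :
    (E₁mod p).Nonsingular (-2) 3 := by
  refine (nonsingular_iff ..).mpr ⟨?_, Or.inr fun h => h5 ?_⟩
  · rw [equation_iff]; simp only [E₁mod]; ring
  · simp only [E₁mod] at h; linear_combination h

variable [Fact p.Prime]

lemma E₁mod_nonsingular_three_neg_two (h5 : (5 : ZMod p) ≠ 0) :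
    (E₁mod p).Nonsingular 3 (-2) := by
  refine (nonsingular_iff ..).mpr ⟨?_, Or.inl fun h => h5 ?_⟩
  · rw [equation_iff]; simp only [E₁mod]; ring
  · simp only [E₁mod] at h
    exact mul_self_eq_zero.mp (by linear_combination -h)

lemma E₁mod_two_nsmul_some_neg_two_three (h5 : (5 : ZMod p) ≠ 0) :
    2 • Point.some _ _ (E₁mod_nonsingular_neg_two_three h5) =
      Point.some _ _ (E₁mod_nonsingular_three_neg_two h5) := by
  have hy : (3 : ZMod p) ≠ (E₁mod p).negY (-2) 3 := fun h => h5 <| by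
    simp only [negY, E₁mod] at h; linear_combination h
  have hslope : (E₁mod p).slope (-2) (-2) 3 3 = -1 := by
    rw [slope_of_Y_ne rfl hy, div_eq_iff (sub_ne_zero.mpr hy)]
    simp only [negY, E₁mod]; ring
  rw [two_nsmul, Point.add_of_Y_ne hy, Point.some.injEq, addY, negAddY, negY, addX, hslope]
  simp only [E₁mod]
  constructor <;> ring

lemma E₁mod_two_nsmul_some_three_neg_two (h5 : (5 : ZMod p) ≠ 0) :
    2 • Point.some _ _ (E₁mod_nonsingular_three_neg_two h5) = 0 := by
  rw [two_nsmul]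
  exact Point.add_self_of_Y_eq (by simp only [negY, E₁mod]; ring)

lemma E₁mod_addOrderOf_some_neg_two_three (h5 : (5 : ZMod p) ≠ 0) :
    addOrderOf (Point.some _ _ (E₁mod_nonsingular_neg_two_three h5)) = 4 := by
  refine addOrderOf_eq_prime_pow (p := 2) (n := 1) ?_ ?_
  · rw [pow_one, E₁mod_two_nsmul_some_neg_two_three h5]
    exact Point.some_ne_zero _
  · rw [pow_succ, pow_one, mul_nsmul, E₁mod_two_nsmul_some_neg_two_three h5,
      E₁mod_two_nsmul_some_three_neg_two h5]

lemma four_dvd_card_E₁mod (h5 : (5 : ZMod p) ≠ 0) : 4 ∣ Nat.card (E₁mod p).Point :=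
  E₁mod_addOrderOf_some_neg_two_three h5 ▸ addOrderOf_dvd_natCard _

end E₁mod

theorem p_not_dvd_card_E₁_mod_p_general (p : ℕ) (hp : p.Prime) (hp3' : 3 ≤ p)
    (hp5 : p ≠ 5) :
    ¬ p ∣ Nat.card (E₁mod p).Point ∧
      ¬ ((p : ℤ) + 1 - Nat.card (E₁mod p).Point ≡ 1 [ZMOD p]) := by
  have := Fact.mk hp
  have h5 : (5 : ZMod p) ≠ 0 := by
    exact_mod_cast (ZMod.natCast_eq_zero_iff 5 p).not.mpr
      ((Nat.prime_dvd_prime_iff_eq hp Nat.prime_five).not.mpr hp5)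
  have hcop : Nat.Coprime 4 p :=
    Nat.Coprime.pow_left 2 ((Nat.coprime_primes Nat.prime_two hp).mpr (by omega))
  have hdvd : ¬ p ∣ Nat.card (E₁mod p).Point := fun hpN => by
    have h4p := Nat.le_of_dvd Nat.card_pos
      (hcop.mul_dvd_of_dvd_of_dvd (four_dvd_card_E₁mod h5) hpN)
    have hle := (E₁mod p).card_point_le
    rw [ZMod.card] at hle
    omega
  refine ⟨hdvd, fun h => hdvd ?_⟩
  have hpN : (p : ℤ) ∣ Nat.card (E₁mod p).Point - p := by
    convert h.dvd using 1; ring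
  exact_mod_cast dvd_sub_self_right.mp hpN

/-- For any prime `p ≥ 3` with `p ∉ {3, 5}`, `p` does not divide the number of points
of the reduction of `E₁` modulo `p`; equivalently `a_p(E₁) = p + 1 − #E₁(𝔽_p)` is not
congruent to `1` modulo `p`. -/
theorem p_not_dvd_card_E₁_mod_p (p : ℕ) (hp : p.Prime) (hp3' : 3 ≤ p) (hp3 : p ≠ 3)
    (hp5 : p ≠ 5) :
    ¬ p ∣ Nat.card (E₁mod p).Point ∧
      ¬ ((p : ℤ) + 1 - Nat.card (E₁mod p).Point ≡ 1 [ZMOD p]) :=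
  p_not_dvd_card_E₁_mod_p_general p hp hp3' hp5
end

section
/- Every element of the subgroup G of GL₂(ℤ/8ℤ) generated by [[5,4],[2,3]], [[1,0],[0,5]], [[1,4],[0,5]], [[1,0],[4,5]] has 2-power order; that is, G is a 2-group. -/
open Matrix

/-- Reduction mod 2 on `ℤ/8ℤ`. -/
private abbrev φ' : ZMod 8 →+* ZMod 2 := ZMod.castHom (show (2:ℕ) ∣ 8 by norm_num) (ZMod 2)

private lemma half' : ∀ a : ZMod 8, φ' a = 0 → ∃ c, a = 2*c := by decide

/-- Any 2×2 matrix over `ℤ/8ℤ` reducing to the identity mod 2 has fourth power `1`. -/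
private lemma key' (A : Matrix (Fin 2) (Fin 2) (ZMod 8))
    (h : A.map φ' = 1) : A ^ 4 = 1 := by
  have hB : ∀ i j, φ' ((A - 1) i j) = 0 := by
    intro i j
    have h1 := congrFun (congrFun h i) j
    simp only [Matrix.map_apply] at h1
    simp only [Matrix.sub_apply, map_sub, h1, Matrix.one_apply]
    split_ifs <;> simp [Matrix.one_apply, *] <;> decide
  choose C hC using fun i j => half' _ (hB i j)
  set X := Matrix.of C with hX
  have hA : A = 1 + (X + X) := by
    ext i j
    have h2 := hC i j
    simp only [Matrix.sub_apply] at h2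
    simp only [Matrix.add_apply, hX, Matrix.of_apply]
    linear_combination h2
  have h8 : (8 : Matrix (Fin 2) (Fin 2) (ZMod 8)) = 0 := by decide
  have h24 : (24 : Matrix (Fin 2) (Fin 2) (ZMod 8)) = 0 := by decide
  have h32 : (32 : Matrix (Fin 2) (Fin 2) (ZMod 8)) = 0 := by decide
  have h16 : (16 : Matrix (Fin 2) (Fin 2) (ZMod 8)) = 0 := by decide
  have expand : (1 + (X + X))^4 = 1 + 8*X + 24*X^2 + 32*X^3 + 16*X^4 := by noncomm_ring
  rw [hA, expand, h8, h24, h32, h16]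
  simp

/-- Every element of `G` has 2-power order; that is, `G` is a 2-group. -/
theorem G_is_two_group : IsPGroup 2 G := by
  have hker : G ≤ (Matrix.GeneralLinearGroup.map φ').ker := by
    rw [G, Subgroup.closure_le]
    intro x hx
    simp only [Set.mem_insert_iff, Set.mem_singleton_iff] at hx
    rw [SetLike.mem_coe, MonoidHom.mem_ker]
    rcases hx with rfl|rfl|rfl|rfl <;> (apply Units.ext; decide)
  intro g
  refine ⟨2, ?_⟩
  have hg := hker g.2
  rw [MonoidHom.mem_ker] at hg
  have h1 : ((g : GL (Fin 2) (ZMod 8)) : Matrix (Fin 2) (Fin 2) (ZMod 8)).map φ' = 1 := by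
    have := congrArg (Units.val) hg
    simpa [Matrix.GeneralLinearGroup.map] using this
  have h4 := key' _ h1
  have hp : ((g : GL (Fin 2) (ZMod 8)))^4 = 1 := by
    apply Units.ext
    rw [Units.val_pow_eq_pow_val, Units.val_one]
    exact h4
  refine Subtype.ext ?_
  push_cast
  norm_num [hp]
end
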